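/- Suppose there exists an infinite path from state s in a finite labeled transition system all of whose transitions are private and such that from some point on, no state along the path enables any public action in the set L. Then there exists a lasso: states s → (via private transitions, with no L-enabling constraint) s₀ and a nonempty private-transition cycle from s₀ back to s₀ such that no state on the cycle enables a public action in L. -/
import Mathlib


/-- A state `s` enables some public action in `L`. -/
def EnablesIn {S A : Type*} (δ : S → A → S → Prop) (L : Set A) (s : S) : Prop :=
  ∃ a ∈ L, ∃ t, δ s a t

/-- In a finite labeled transition system with actions partitioned into public
(`Sp`) and private (`Γ`): if there is an infinite path from `s` consisting only
of private transitions, on which from some point on no state enables a public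
action in `L`, then there is a lasso: a private path from `s` to a state `s₀`
and a nonempty private cycle from `s₀` back to `s₀` no state of which enables a
public action in `L`. -/
theorem private_path_lasso {S A : Type*} [Finite S]
    (δ : S → A → S → Prop) (Sp Γ : Set A) (hdisj : Disjoint Sp Γ)
    (L : Set A) (hL : L ⊆ Sp) (s : S)
    (ρ : ℕ → S) (as : ℕ → A) (h0 : ρ 0 = s)
    (hstep : ∀ i, as i ∈ Γ ∧ δ (ρ i) (as i) (ρ (i + 1)))
    (N : ℕ) (hfree : ∀ i, N ≤ i → ¬ EnablesIn δ L (ρ i)) :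
    ∃ s₀ : S,
      (∃ (n : ℕ) (σ : ℕ → S) (τ : ℕ → A), σ 0 = s ∧ σ n = s₀ ∧
          ∀ i < n, τ i ∈ Γ ∧ δ (σ i) (τ i) (σ (i + 1))) ∧
      (∃ (m : ℕ), 0 < m ∧ ∃ (σ : ℕ → S) (τ : ℕ → A), σ 0 = s₀ ∧ σ m = s₀ ∧
          ∀ i < m, τ i ∈ Γ ∧ δ (σ i) (τ i) (σ (i + 1)) ∧
            ¬ EnablesIn δ L (σ i)) := by

  obtain ⟨a, b, hab, heq⟩ : ∃ a b : ℕ, a < b ∧ ρ (N + a) = ρ (N + b) := by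
    have : ¬ Function.Injective (fun n : ℕ => ρ (N + n)) := by
      intro hinj
      exact Finite.of_injective _ hinj |>.false
    simp only [Function.Injective, not_forall] at this
    obtain ⟨a, b, heq, hne⟩ := this
    rcases lt_or_gt_of_ne hne with h | h
    · exact ⟨a, b, h, heq⟩
    · exact ⟨b, a, h, heq.symm⟩
  refine ⟨ρ (N + a), ⟨N + a, ρ, as, h0, rfl, fun i _ => hstep i⟩,
    ⟨b - a, Nat.sub_pos_of_lt hab, fun k => ρ (N + a + k), fun k => as (N + a + k),
      rfl, ?_, ?_⟩⟩
  · have : N + a + (b - a) = N + b := by omega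
    show ρ (N + a + (b - a)) = ρ (N + a)
    rw [this, heq]
  · intro i _
    refine ⟨(hstep _).1, (hstep _).2, hfree _ (by omega)⟩
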